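/- Let G be a graph and define the transformed graph G' as follows: V(G') = V1 ∪ V2 where V1 and V2 are two disjoint copies of V(G); a vertex v1 ∈ V1 is adjacent in G' to every u2 ∈ V2 with u in the closed neighbourhood of v in G; a vertex v2 ∈ V2 is adjacent to every u2 ∈ V2 with u at distance exactly 1 or 2 from v in G; and V1 is an independent set. Then for every graph G with no isolated vertex, the semitotal domination number of G equals the total domination number of G'. -/

import Mathlib

open SimpleGraph

/-- `D` is a dominating set of `G`. -/
def IsDomSet {V : Type*} [DecidableEq V] (G : SimpleGraph V) (D : Finset V) : Prop :=
  ∀ v, v ∉ D → ∃ u ∈ D, G.Adj u v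

/-- `D` is a total dominating set of `G`. -/
def IsTotDomSet {V : Type*} [DecidableEq V] (G : SimpleGraph V) (D : Finset V) : Prop :=
  ∀ v : V, ∃ u ∈ D, G.Adj u v

/-- `u` and `v` are distinct and within distance at most 2 in `G`. -/
def WithinTwo {V : Type*} (G : SimpleGraph V) (u v : V) : Prop :=
  G.Adj u v ∨ ∃ w, G.Adj u w ∧ G.Adj w v

/-- `D` is a semitotal dominating set of `G`. -/
def IsSemiTDSet {V : Type*} [DecidableEq V] (G : SimpleGraph V) (D : Finset V) : Prop :=
  IsDomSet G D ∧ ∀ v ∈ D, ∃ u ∈ D, u ≠ v ∧ WithinTwo G u v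

/-- The domination number of `G`. -/
noncomputable def gamma {V : Type*} [Fintype V] [DecidableEq V] (G : SimpleGraph V) : ℕ :=
  sInf {n | ∃ D : Finset V, IsDomSet G D ∧ D.card = n}

/-- The total domination number of `G`. -/
noncomputable def gammaT {V : Type*} [Fintype V] [DecidableEq V] (G : SimpleGraph V) : ℕ :=
  sInf {n | ∃ D : Finset V, IsTotDomSet G D ∧ D.card = n}

/-- The semitotal domination number of `G`. -/
noncomputable def gammaT2 {V : Type*} [Fintype V] [DecidableEq V] (G : SimpleGraph V) : ℕ :=
  sInf {n | ∃ D : Finset V, IsSemiTDSet G D ∧ D.card = n}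

/-- The transformed graph `G'` on `V ⊕ V`: every `v₁` in the first copy is adjacent to
the second-copy vertices `u₂` with `u ∈ N_G[v]`; two second-copy vertices are adjacent
iff the corresponding vertices are at distance 1 or 2 in `G`; the first copy is independent. -/
def transform {V : Type*} (G : SimpleGraph V) : SimpleGraph (V ⊕ V) :=
  SimpleGraph.fromRel (fun a b =>
    match a, b with
    | Sum.inl v, Sum.inr u => u = v ∨ G.Adj v u
    | Sum.inr v, Sum.inr u => G.Adj v u ∨ ∃ w, G.Adj v w ∧ G.Adj w u
    | _, _ => False)

/-!
A semitotal dominating set `D` of `G` gives the total dominating set `D₂` of `G'`: a vertex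
outside `D` is dominated by a `G`-neighbour in `D`, and a vertex of `D` has a partner of `D`
within distance two. Conversely, let `D'` be a total dominating set of `G'` with layers `L ⊆ V₁`
and `R ⊆ V₂`. Since `V₁` is independent, every `v₁` is dominated by some `w₂ ∈ R` with
`w ∈ N_G[v]`, so `R` dominates `G`. The set `L ∪ R` is semitotal except possibly at vertices
of `L ∩ R`; adding one `G`-neighbour for each of them keeps the size at most `|L| + |R| = |D'|`.
-/

open Finset

theorem sInf_card_le_of_forall_exists_card_le {α β : Type*} {P : Finset α → Prop}
    {Q : Finset β → Prop} (hP : ∃ D, P D) (h : ∀ D, P D → ∃ E, Q E ∧ #E ≤ #D) :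
    sInf {n | ∃ E, Q E ∧ #E = n} ≤ sInf {n | ∃ D, P D ∧ #D = n} := by
  obtain ⟨D₀, hD₀⟩ := hP
  obtain ⟨D, hD, hcard⟩ :=
    Nat.sInf_mem (s := {n | ∃ D, P D ∧ #D = n}) ⟨_, D₀, hD₀, rfl⟩
  obtain ⟨E, hE, hle⟩ := h D hD
  calc sInf {n | ∃ E, Q E ∧ #E = n} ≤ #E := Nat.sInf_le ⟨E, hE, rfl⟩
    _ ≤ #D := hle
    _ = _ := hcard

section Transform

variable {V : Type*} {G : SimpleGraph V} {u v : V}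

theorem transform_adj_inl_inr : (transform G).Adj (.inl v) (.inr u) ↔ u = v ∨ G.Adj v u := by
  simp [transform]

theorem transform_not_adj_inl_inl : ¬(transform G).Adj (.inl v) (.inl u) := by
  simp [transform]

theorem transform_adj_inr_inr :
    (transform G).Adj (.inr v) (.inr u) ↔ v ≠ u ∧ WithinTwo G v u := by
  simp only [transform, fromRel_adj, WithinTwo, ne_eq, Sum.inr.injEq]
  constructor
  · rintro ⟨hne, (h | h) | (h | ⟨w, h₁, h₂⟩)⟩
    · exact ⟨hne, .inl h⟩
    · exact ⟨hne, .inr h⟩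
    · exact ⟨hne, .inl h.symm⟩
    · exact ⟨hne, .inr ⟨w, h₂.symm, h₁.symm⟩⟩
  · rintro ⟨hne, h⟩
    exact ⟨hne, .inl h⟩

end Transform

section Domination

variable {V : Type*} [DecidableEq V] {G : SimpleGraph V}

theorem IsDomSet.mono {D E : Finset V} (hD : IsDomSet G D) (hDE : D ⊆ E) : IsDomSet G E := by
  intro v hv
  obtain ⟨u, hu, huv⟩ := hD v fun h => hv (hDE h)
  exact ⟨u, hDE hu, huv⟩

theorem isSemiTDSet_univ [Fintype V] (hiso : ∀ v : V, ∃ u, G.Adj v u) :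
    IsSemiTDSet G univ := by
  refine ⟨fun v hv => absurd (mem_univ v) hv, fun v _ => ?_⟩
  obtain ⟨u, hvu⟩ := hiso v
  exact ⟨u, mem_univ u, hvu.ne', .inl hvu.symm⟩

theorem IsSemiTDSet.isTotDomSet_transform_map_inr {D : Finset V} (hD : IsSemiTDSet G D) :
    IsTotDomSet (transform G) (D.map .inr) := by
  obtain ⟨hdom, hsemi⟩ := hD
  rintro (v | v) <;> by_cases hv : v ∈ D
  · exact ⟨.inr v, mem_map_of_mem _ hv, (transform_adj_inl_inr.mpr (.inl rfl)).symm⟩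
  · obtain ⟨u, hu, huv⟩ := hdom v hv
    exact ⟨.inr u, mem_map_of_mem _ hu, (transform_adj_inl_inr.mpr (.inr huv.symm)).symm⟩
  · obtain ⟨u, hu, hne, huv⟩ := hsemi v hv
    exact ⟨.inr u, mem_map_of_mem _ hu, transform_adj_inr_inr.mpr ⟨hne, huv⟩⟩
  · obtain ⟨u, hu, huv⟩ := hdom v hv
    exact ⟨.inr u, mem_map_of_mem _ hu, transform_adj_inr_inr.mpr ⟨huv.ne, .inl huv⟩⟩

namespace IsTotDomSet

variable {D' : Finset (V ⊕ V)}

theorem exists_mem_toRight_eq_or_adj (hD' : IsTotDomSet (transform G) D') (v : V) :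
    ∃ w ∈ D'.toRight, w = v ∨ G.Adj w v := by
  obtain ⟨x | w, hx, hxv⟩ := hD' (.inl v)
  · exact absurd hxv transform_not_adj_inl_inl
  · refine ⟨w, mem_toRight.mpr hx, ?_⟩
    rcases transform_adj_inl_inr.mp hxv.symm with h | h
    exacts [.inl h, .inr h.symm]

theorem isDomSet_toRight (hD' : IsTotDomSet (transform G) D') : IsDomSet G D'.toRight := by
  intro v hv
  obtain ⟨w, hw, rfl | hwv⟩ := hD'.exists_mem_toRight_eq_or_adj v
  exacts [absurd hw hv, ⟨w, hw, hwv⟩]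

theorem exists_withinTwo_of_notMem_inter (hD' : IsTotDomSet (transform G) D') {v : V}
    (hv : v ∈ D'.toLeft ∪ D'.toRight) (hvLR : v ∉ D'.toLeft ∩ D'.toRight) :
    ∃ u ∈ D'.toLeft ∪ D'.toRight, u ≠ v ∧ WithinTwo G u v := by
  by_cases hvR : v ∈ D'.toRight
  · have hvL : v ∉ D'.toLeft := fun hvL => hvLR (mem_inter.mpr ⟨hvL, hvR⟩)
    obtain ⟨w | w, hw, hwv⟩ := hD' (.inr v)
    · rcases transform_adj_inl_inr.mp hwv with rfl | h
      · exact absurd (mem_toLeft.mpr hw) hvL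
      · exact ⟨w, mem_union_left _ (mem_toLeft.mpr hw), h.ne, .inl h⟩
    · obtain ⟨hne, h⟩ := transform_adj_inr_inr.mp hwv
      exact ⟨w, mem_union_right _ (mem_toRight.mpr hw), hne, h⟩
  · obtain ⟨w, hw, rfl | hwv⟩ := hD'.exists_mem_toRight_eq_or_adj v
    · exact absurd hw hvR
    · exact ⟨w, mem_union_right _ hw, hwv.ne, .inl hwv⟩

theorem isSemiTDSet_union_image (hD' : IsTotDomSet (transform G) D') {nb : V → V}
    (hnb : ∀ v, G.Adj v (nb v)) :
    IsSemiTDSet G (D'.toLeft ∪ D'.toRight ∪ (D'.toLeft ∩ D'.toRight).image nb) := by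
  set LR := D'.toLeft ∪ D'.toRight
  have hLR : LR ⊆ LR ∪ (D'.toLeft ∩ D'.toRight).image nb := subset_union_left
  refine ⟨hD'.isDomSet_toRight.mono (subset_union_right.trans hLR), fun v hv => ?_⟩
  rcases mem_union.mp hv with hv | hv
  · by_cases hvLR : v ∈ D'.toLeft ∩ D'.toRight
    · exact ⟨nb v, mem_union_right _ (mem_image_of_mem nb hvLR), (hnb v).ne',
        .inl (hnb v).symm⟩
    · obtain ⟨u, hu, hne, huv⟩ := hD'.exists_withinTwo_of_notMem_inter hv hvLR
      exact ⟨u, hLR hu, hne, huv⟩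
  · obtain ⟨w, hw, rfl⟩ := mem_image.mp hv
    exact ⟨w, hLR (mem_union_left _ (mem_inter.mp hw).1), (hnb w).ne, .inl (hnb w)⟩

theorem exists_isSemiTDSet_card_le (hD' : IsTotDomSet (transform G) D')
    (hiso : ∀ v : V, ∃ u, G.Adj v u) :
    ∃ D, IsSemiTDSet G D ∧ #D ≤ #D' := by
  choose nb hnb using hiso
  refine ⟨_, hD'.isSemiTDSet_union_image hnb, ?_⟩
  calc #(D'.toLeft ∪ D'.toRight ∪ (D'.toLeft ∩ D'.toRight).image nb)
      ≤ #(D'.toLeft ∪ D'.toRight) + #(D'.toLeft ∩ D'.toRight) :=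
        (card_union_le _ _).trans (Nat.add_le_add_left card_image_le _)
    _ = #D' := by rw [card_union_add_card_inter, card_toLeft_add_card_toRight]

end IsTotDomSet

end Domination

theorem semitotal_eq_total_transform {V : Type*} [Fintype V] [DecidableEq V]
    (G : SimpleGraph V) (hiso : ∀ v : V, ∃ u, G.Adj v u) :
    gammaT2 G = gammaT (transform G) := by
  have hsemi : IsSemiTDSet G univ := isSemiTDSet_univ hiso
  apply le_antisymm
  · exact sInf_card_le_of_forall_exists_card_le ⟨_, hsemi.isTotDomSet_transform_map_inr⟩
      fun D' hD' => hD'.exists_isSemiTDSet_card_le hiso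
  · exact sInf_card_le_of_forall_exists_card_le ⟨_, hsemi⟩ fun D hD =>
      ⟨_, hD.isTotDomSet_transform_map_inr, (card_map _).le⟩
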